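/- arXiv:0810.0392 — 2 statements merged into one kernel-verified Lean document; each statement's English description precedes it below -/
import Mathlib

section
/- For every configuration S ∈ 𝒟∖{𝒟₀}, f₁(S) ≥ g(S) ≥ f₁(S)/(1 + log f₁(S)), where g(S) = max_{1 ≤ k ≤ N} R_k T_k. -/
open MeasureTheory Filter
open scoped ENNReal NNReal

namespace EV

/-- A configuration of the exclusion-voter model is the finite hybrid-zone word
(`false` = 0, `true` = 1); the full two-sided configuration is `1^∞ w 0^∞`. -/
abbrev Word := List Bool

/-- Canonical (normalized) words: empty (the ground state `𝒟₀`) or starting with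
a `0` and ending with a `1`; these are in bijection with the configuration space `𝒟`. -/
def IsConfig (w : Word) : Prop :=
  w = [] ∨ (w.head? = some false ∧ w.getLast? = some true)

/-- The ground-state Heaviside configuration `𝒟₀ = …111000…`. -/
def groundState : Word := []

/-- Pad a word with one boundary symbol of the adjacent infinite block on each side. -/
def pad (w : Word) : Word := true :: (w ++ [false])

/-- Normalize: strip leading `1`s (they merge into the left infinite block of `1`s)
and trailing `0`s (they merge into the right infinite block of `0`s). -/
def strip (w : Word) : Word :=
  ((w.dropWhile (· = true)).reverse.dropWhile (· = false)).reverse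

def setPair (w : Word) (i : ℕ) (a b : Bool) : Word := (w.set i a).set (i + 1) b

def swapPair (w : Word) (i : ℕ) : Word :=
  setPair w i (w.getD (i + 1) true) (w.getD i true)

/-- Indices of the unlike adjacent pairs (`01` or `10`), read off the padded word. -/
def unlike (w : Word) : List ℕ :=
  (List.range (w.length + 1)).filter
    (fun i => (pad w).getD i true ≠ (pad w).getD (i + 1) true)

/-- One-step transition kernel of the discrete-time exclusion-voter chain with mixing
parameter `β` and exclusion parameter `p`: an unlike adjacent pair is chosen uniformly
at random; with probability `β` a voter move flips the pair to `00` or `11` (each with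
probability `1/2`); with probability `1-β` an exclusion move swaps a `01` with
probability `p` and a `10` with probability `1-p` (otherwise no change). -/
noncomputable def P (β p : ℝ) (w w' : Word) : ℝ :=
  ((unlike w).map (fun i =>
    let a := (pad w).getD i true
    let swapProb := if a then 1 - p else p
    ((unlike w).length : ℝ)⁻¹ *
      (β * (1 / 2) * (if strip (setPair (pad w) i false false) = w' then 1 else 0)
       + β * (1 / 2) * (if strip (setPair (pad w) i true true) = w' then 1 else 0)
       + (1 - β) * swapProb * (if strip (swapPair (pad w) i) = w' then 1 else 0)
       + (1 - β) * (1 - swapProb) * (if w = w' then 1 else 0)))).sum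

/-- `n`-step transition probabilities. -/
noncomputable def Pn (β p : ℝ) : ℕ → Word → Word → ℝ
  | 0 => fun w w' => if w = w' then 1 else 0
  | n + 1 => fun w w' => ∑' z : Word, Pn β p n w z * P β p z w'

/-- `w'` is accessible from `w`: some `n`-step transition probability is positive. -/
def Accessible (β p : ℝ) (w w' : Word) : Prop :=
  ∃ n : ℕ, 0 < n ∧ 0 < Pn β p n w w'

/-- Two states communicate: each is accessible from the other. -/
def Communicate (β p : ℝ) (w w' : Word) : Prop :=
  Accessible β p w w' ∧ Accessible β p w' w

instance : MeasurableSpace Word := ⊤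

/-- `ξ` is (a realization of) the discrete-time exclusion-voter Markov chain with
parameters `(β, p)` under the probability measure `μ`. -/
def IsEVChain (β p : ℝ) {Ω : Type*} [MeasurableSpace Ω] (μ : Measure Ω)
    (ξ : ℕ → Ω → Word) : Prop :=
  (∀ t, Measurable (ξ t)) ∧
  ∀ (t : ℕ) (path : ℕ → Word),
    μ {ω | ∀ i ≤ t + 1, ξ i ω = path i}
      = μ {ω | ∀ i ≤ t, ξ i ω = path i} * ENNReal.ofReal (P β p (path t) (path (t + 1)))

/-- The relaxation time `τ = min {t ∈ ℕ, t ≥ 1 : ξ_t = 𝒟₀}` (`∞` if there is no such `t`). -/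
noncomputable def relaxTime {Ω : Type*} (ξ : ℕ → Ω → Word) (ω : Ω) : ℝ≥0∞ :=
  sInf {r : ℝ≥0∞ | ∃ t : ℕ, 0 < t ∧ ξ t ω = groundState ∧ r = (t : ℝ≥0∞)}

/-- The size `|S|` of the hybrid zone. -/
def hz (w : Word) : ℕ := w.length

/-- The number of blocks `N(S)`: the number of (finite) `1`-blocks of the hybrid zone. -/
def nb (w : Word) : ℕ :=
  ((Finset.range w.length).filter
    (fun b => w.getD b false = true ∧ (b = 0 ∨ w.getD (b - 1) true = false))).card

/-- Number of `0`s among the first `c` positions of the hybrid zone. -/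
def z0 (w : Word) (c : ℕ) : ℕ :=
  ((Finset.range c).filter (fun a => w.getD a true = false)).card

/-- Number of `1`s of the hybrid zone at positions `≥ c`. -/
def o1 (w : Word) (c : ℕ) : ℕ :=
  ((Finset.Ico c w.length).filter (fun b => w.getD b false = true)).card

/-- `f₁(S) = Σᵢ mᵢ Rᵢ = Σᵢ nᵢ Tᵢ`: each `1` contributes the number of `0`s to its left. -/
def f1 (w : Word) : ℕ :=
  ∑ b ∈ (Finset.range w.length).filter (fun b => w.getD b false = true), z0 w b

/-- `f₂(S) = (1/2)(Σᵢ mᵢ Rᵢ² + Σᵢ nᵢ Tᵢ²)`: each `1` contributes the squared number of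
`0`s to its left, each `0` the squared number of `1`s to its right. -/
noncomputable def f2 (w : Word) : ℝ :=
  (1 / 2) *
    ((∑ b ∈ (Finset.range w.length).filter (fun b => w.getD b false = true),
        ((z0 w b : ℝ)) ^ 2)
     + (∑ a ∈ (Finset.range w.length).filter (fun a => w.getD a true = false),
        ((o1 w (a + 1) : ℝ)) ^ 2))

/-- `g(S) = max_{1 ≤ k ≤ N} R_k T_k`: the maximum over the `01`-corners of
(number of `0`s up to the corner) × (number of `1`s after the corner). -/
def gfun (w : Word) : ℕ :=
  ((Finset.range w.length).filter
    (fun a => w.getD a true = false ∧ w.getD (a + 1) false = true)).sup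
    (fun a => z0 w (a + 1) * o1 w (a + 1))

/-- `φ₁(S) = Σᵢ Σ_{j=R_{i-1}+1}^{R_i} Σ_{k=1}^{T_i} 1/(j+k)`: the `j`-th `0` (at position `a`,
so `j = z0 w (a+1)`) contributes `Σ_{k=1}^{T} 1/(j+k)` with `T` the number of `1`s to its right. -/
noncomputable def phi1 (w : Word) : ℝ :=
  ∑ a ∈ (Finset.range w.length).filter (fun a => w.getD a true = false),
    ∑ k ∈ Finset.Icc 1 (o1 w (a + 1)), (1 : ℝ) / ((z0 w (a + 1) : ℝ) + (k : ℝ))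

end EV

/-
`f₁` counts the pairs (`0`, later `1`), of which `R_k T_k` counts only some, so `g ≤ f₁`.
Counting those pairs by their `0` instead, the `j`-th `0` contributes the number `T` of `1`s to
its right, and `j T ≤ g` because sliding that `0` to the right end of its block increases `j`
and keeps `T`. The `j` are distinct and `1 ≤ j ≤ j T ≤ f₁`, so
`f₁ = Σ T ≤ g Σ 1/j ≤ g (1 + 1/2 + ⋯ + 1/f₁) ≤ g (1 + log f₁)`.
-/

theorem sum_le_mul_harmonic {ι : Type*} {s : Finset ι} {j : ι → ℕ} {x : ι → ℝ} {G : ℝ} {n : ℕ}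
    (hj : Set.InjOn j s) (hjn : ∀ i ∈ s, j i ∈ Finset.Icc 1 n) (hx : ∀ i ∈ s, j i * x i ≤ G)
    (hG : 0 ≤ G) :
    ∑ i ∈ s, x i ≤ G * harmonic n := by
  have hjpos (i : ι) (hi : i ∈ s) : (0 : ℝ) < j i := by
    exact_mod_cast (Finset.mem_Icc.1 (hjn i hi)).1
  calc ∑ i ∈ s, x i ≤ ∑ i ∈ s, G * (j i : ℝ)⁻¹ :=
        Finset.sum_le_sum fun i hi => by
          rw [← div_eq_mul_inv, le_div_iff₀ (hjpos i hi), mul_comm]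
          exact hx i hi
    _ = G * ∑ m ∈ s.image j, (m : ℝ)⁻¹ := by rw [Finset.sum_image hj, Finset.mul_sum]
    _ ≤ G * ∑ m ∈ Finset.Icc 1 n, (m : ℝ)⁻¹ := by
        gcongr
        exact Finset.image_subset_iff.2 hjn
    _ = G * harmonic n := by simp [harmonic_eq_sum_Icc]

namespace EV

theorem getD_eq_getD_of_lt {w : Word} {i : ℕ} (hi : i < w.length) (d d' : Bool) :
    w.getD i d = w.getD i d' := by
  simp only [List.getD_eq_getElem _ _ hi]

def zeroPositions (w : Word) : Finset ℕ :=
  (Finset.range w.length).filter (fun a => w.getD a true = false)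

def onePositions (w : Word) : Finset ℕ :=
  (Finset.range w.length).filter (fun b => w.getD b false = true)

theorem z0_mono (w : Word) : Monotone (z0 w) := fun _ _ h =>
  Finset.card_le_card (Finset.filter_subset_filter _ (Finset.range_subset_range.2 h))

theorem z0_succ_of_zero {w : Word} {a : ℕ} (ha : w.getD a true = false) :
    z0 w (a + 1) = z0 w a + 1 := by
  rw [z0, Finset.range_add_one, Finset.filter_insert, if_pos ha,
    Finset.card_insert_of_notMem (by simp)]
  rfl

theorem z0_strictMonoOn {w : Word} : StrictMonoOn (fun a => z0 w (a + 1)) (zeroPositions w) := by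
  intro a _ a' ha' h
  rw [zeroPositions, Finset.coe_filter] at ha'
  calc z0 w (a + 1) ≤ z0 w a' := z0_mono w h
    _ < z0 w (a' + 1) := by rw [z0_succ_of_zero ha'.2]; omega

theorem o1_eq_of_ne_true {w : Word} {c : ℕ} (hc : w.getD c false ≠ true) :
    o1 w (c + 1) = o1 w c := by
  rcases lt_or_ge c w.length with h | h
  · rw [o1, o1, ← Finset.insert_Ico_add_one_left_eq_Ico h, Finset.filter_insert, if_neg hc]
  · simp [o1, Finset.Ico_eq_empty_of_le, h, h.trans c.le_succ]

theorem z0_eq_card_filter {w : Word} {b : ℕ} (hb : b ≤ w.length) :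
    z0 w b = ((zeroPositions w).filter (· < b)).card := by
  rw [z0, zeroPositions, Finset.filter_filter]
  congr 1
  ext a
  simp only [Finset.mem_filter, Finset.mem_range]
  grind

theorem o1_succ_eq_card_filter (w : Word) (a : ℕ) :
    o1 w (a + 1) = ((onePositions w).filter (a < ·)).card := by
  rw [o1, onePositions, Finset.filter_filter]
  congr 1
  ext b
  simp only [Finset.mem_filter, Finset.mem_Ico, Finset.mem_range]
  grind

theorem f1_eq_sum_o1 (w : Word) : f1 w = ∑ a ∈ zeroPositions w, o1 w (a + 1) := by
  have hz0 : ∀ b ∈ onePositions w, z0 w b = ((zeroPositions w).filter (· < b)).card :=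
    fun b hb => z0_eq_card_filter (Finset.mem_range.1 (Finset.mem_filter.1 hb).1).le
  rw [f1, ← onePositions, Finset.sum_congr rfl hz0,
    Finset.sum_congr rfl fun a _ => o1_succ_eq_card_filter w a]
  exact (Finset.sum_card_bipartiteAbove_eq_sum_card_bipartiteBelow (· < ·)).symm

theorem z0_mul_o1_le_f1 (w : Word) (c : ℕ) : z0 w c * o1 w c ≤ f1 w := by
  calc z0 w c * o1 w c = ∑ _b ∈ (Finset.Ico c w.length).filter (fun b => w.getD b false = true),
        z0 w c := by rw [Finset.sum_const, smul_eq_mul, mul_comm, o1]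
    _ ≤ ∑ b ∈ (Finset.Ico c w.length).filter (fun b => w.getD b false = true), z0 w b :=
        Finset.sum_le_sum fun b hb => z0_mono w (Finset.mem_Ico.1 (Finset.mem_filter.1 hb).1).1
    _ ≤ f1 w := by
        refine Finset.sum_le_sum_of_subset (Finset.filter_subset_filter _ ?_)
        exact fun b hb => Finset.mem_range.2 (Finset.mem_Ico.1 hb).2

theorem gfun_le_f1 (w : Word) : gfun w ≤ f1 w :=
  Finset.sup_le fun a _ => z0_mul_o1_le_f1 w (a + 1)

theorem z0_mul_o1_le_gfun {w : Word} {a b : ℕ} (hb : b < w.length) (hb1 : w.getD b false = true)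
    (ha : w.getD a true = false) (hab : a < b) :
    z0 w (a + 1) * o1 w (a + 1) ≤ gfun w := by
  by_cases hcorner : w.getD (a + 1) false = true
  · exact Finset.le_sup (f := fun a => z0 w (a + 1) * o1 w (a + 1))
      (Finset.mem_filter.2 ⟨Finset.mem_range.2 (by omega), ha, hcorner⟩)
  · have hab' : a + 1 < b := by
      rcases (Nat.succ_le_of_lt hab).lt_or_eq with h | rfl
      · exact h
      · exact absurd hb1 hcorner
    have hzero : w.getD (a + 1) true = false := by
      rw [getD_eq_getD_of_lt (by omega) true false]
      simpa using hcorner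
    calc z0 w (a + 1) * o1 w (a + 1) ≤ z0 w (a + 1 + 1) * o1 w (a + 1 + 1) := by
          rw [o1_eq_of_ne_true hcorner]
          exact Nat.mul_le_mul_right _ (z0_mono w (Nat.le_succ _))
      _ ≤ gfun w := z0_mul_o1_le_gfun hb hb1 hzero hab'
termination_by b - a

theorem f1_le_gfun_mul_harmonic {w : Word} (hlast : w.getLast? = some true) :
    (f1 w : ℝ) ≤ gfun w * harmonic (f1 w) := by
  have hlen : 0 < w.length := List.length_pos_iff.2 (by rintro rfl; simp at hlast)
  have hL : w.getD (w.length - 1) false = true := by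
    simp [List.getD_eq_getElem?_getD, ← List.getLast?_eq_getElem?, hlast]
  have hbefore_last (a : ℕ) (ha : a ∈ zeroPositions w) : a < w.length - 1 := by
    obtain ⟨ha, hza⟩ := Finset.mem_filter.1 ha
    have ha := Finset.mem_range.1 ha
    refine lt_of_le_of_ne (by omega) fun h => ?_
    rw [h, getD_eq_getD_of_lt (by omega) true false, hL] at hza
    exact Bool.noConfusion hza
  have ho1_pos (a : ℕ) (ha : a ∈ zeroPositions w) : 1 ≤ o1 w (a + 1) :=
    Finset.card_pos.2 ⟨w.length - 1, Finset.mem_filter.2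
      ⟨Finset.mem_Ico.2 ⟨hbefore_last a ha, by omega⟩, hL⟩⟩
  have hj_mem (a : ℕ) (ha : a ∈ zeroPositions w) : z0 w (a + 1) ∈ Finset.Icc 1 (f1 w) := by
    refine Finset.mem_Icc.2 ⟨by rw [z0_succ_of_zero (Finset.mem_filter.1 ha).2]; omega, ?_⟩
    exact (Nat.le_mul_of_pos_right _ (ho1_pos a ha)).trans (z0_mul_o1_le_f1 w (a + 1))
  have hcorner (a : ℕ) (ha : a ∈ zeroPositions w) :
      (z0 w (a + 1) : ℝ) * o1 w (a + 1) ≤ gfun w := by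
    exact_mod_cast z0_mul_o1_le_gfun (by omega) hL (Finset.mem_filter.1 ha).2 (hbefore_last a ha)
  conv_lhs => rw [f1_eq_sum_o1, Nat.cast_sum]
  exact sum_le_mul_harmonic z0_strictMonoOn.injOn hj_mem hcorner (Nat.cast_nonneg _)

theorem g_vs_f1_general (S : Word) (hS : IsConfig S) :
    (gfun S : ℝ) ≤ (f1 S : ℝ) ∧
    (f1 S : ℝ) / (1 + Real.log (f1 S)) ≤ (gfun S : ℝ) := by
  refine ⟨by exact_mod_cast gfun_le_f1 S, ?_⟩
  rw [div_le_iff₀ (by linarith [Real.log_natCast_nonneg (f1 S)])]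
  rcases hS with rfl | ⟨-, hlast⟩
  · simp [f1]
  calc (f1 S : ℝ) ≤ gfun S * harmonic (f1 S) := f1_le_gfun_mul_harmonic hlast
    _ ≤ gfun S * (1 + Real.log (f1 S)) := by
        gcongr
        exact harmonic_le_one_add_log _

/-- Lemma 5: for every `S ∈ 𝒟 ∖ {𝒟₀}`, `f₁(S) ≥ g(S) ≥ f₁(S)/(1 + log f₁(S))`. -/
theorem g_vs_f1 (S : Word) (hS : IsConfig S) (hne : S ≠ groundState) :
    (gfun S : ℝ) ≤ (f1 S : ℝ) ∧
    (f1 S : ℝ) / (1 + Real.log (f1 S)) ≤ (gfun S : ℝ) :=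
  g_vs_f1_general S hS

end EV
end

section
/- For every configuration S ∈ 𝒟∖{𝒟₀}, φ₁(S) ≥ log(|S|/4). -/
open MeasureTheory Filter
open scoped ENNReal NNReal

namespace EV

/-! Write `T` for the number of `1`s and `R` for the number of `0`s, so `R + T = |S|`.
The `j`-th `0` has between `1` and `T` ones to its right (the word ends in a `1`), so it
contributes at least `1/(j+T)` to `φ₁`; these bounds sum to `H_{R+T} - H_T`. The first `0` has
all `T` ones to its right, and its exact contribution `H_{T+1} - 1` exceeds its bound `1/(1+T)`
by `H_T - 1`. Hence `φ₁(S) ≥ H_{|S|} - 1 ≥ log (|S| + 1) - 1 ≥ log (|S|/4)`. -/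

lemma sum_Icc_one_div_add_eq_harmonic_sub (j m : ℕ) :
    ∑ k ∈ Finset.Icc 1 m, (1 : ℝ) / ((j : ℝ) + k) = harmonic (j + m) - harmonic j := by
  induction m with
  | zero => simp
  | succ m ih =>
    rw [Finset.sum_Icc_succ_top (Nat.le_add_left 1 m), ih, ← add_assoc, harmonic_succ]
    push_cast
    ring

lemma one_div_add_le_sum_Icc {j : ℝ} (hj : 0 ≤ j) {m T : ℕ} (hm : 1 ≤ m) (hmT : m ≤ T) :
    1 / (j + T) ≤ ∑ k ∈ Finset.Icc 1 m, 1 / (j + k) :=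
  calc 1 / (j + T) ≤ 1 / (j + m) := by gcongr
    _ ≤ ∑ k ∈ Finset.Icc 1 m, 1 / (j + k) :=
        Finset.single_le_sum (f := fun k : ℕ => 1 / (j + k)) (fun k _ => by positivity)
          (Finset.mem_Icc.mpr ⟨hm, le_rfl⟩)

lemma log_div_four_le_harmonic_sub_one {n : ℕ} (hn : 0 < n) :
    Real.log (n / 4) ≤ harmonic n - 1 := by
  have hlog4 : 1 ≤ Real.log 4 := by
    rw [Real.le_log_iff_exp_le (by norm_num)]
    linarith [Real.exp_one_lt_d9]
  have hmono : Real.log n ≤ Real.log ↑(n + 1) :=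
    Real.log_le_log (by positivity) (by push_cast; linarith)
  rw [Real.log_div (by positivity) (by norm_num)]
  linarith [log_add_one_le_harmonic n]

lemma z0_succ (w : Word) (c : ℕ) :
    z0 w (c + 1) = z0 w c + if w.getD c true = false then 1 else 0 := by
  unfold z0
  rw [Finset.range_add_one, Finset.filter_insert]
  split_ifs
  · exact Finset.card_insert_of_notMem (by simp)
  · rfl

lemma sum_filter_getD_eq_false_comp_z0 (w : Word) (g : ℕ → ℝ) (c : ℕ) :
    ∑ a ∈ (Finset.range c).filter (fun a => w.getD a true = false), g (z0 w (a + 1))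
      = ∑ j ∈ Finset.Icc 1 (z0 w c), g j := by
  induction c with
  | zero => simp [z0]
  | succ c ih =>
    rw [Finset.range_add_one, Finset.filter_insert, z0_succ]
    split_ifs with hc
    · rw [Finset.sum_insert (by simp), ih, z0_succ, if_pos hc,
        Finset.sum_Icc_succ_top (Nat.le_add_left 1 _), add_comm]
    · simpa

lemma z0_length_add_o1_zero (w : Word) : z0 w w.length + o1 w 0 = w.length := by
  have hones : (Finset.range w.length).filter (fun b => w.getD b false = true)
      = (Finset.range w.length).filter (fun b => ¬ w.getD b true = false) := by
    refine Finset.filter_congr fun b hb => ?_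
    rw [List.getD_eq_getElem _ _ (Finset.mem_range.mp hb),
      List.getD_eq_getElem _ _ (Finset.mem_range.mp hb)]
    simp
  rw [z0, o1, ← Finset.range_eq_Ico, hones, Finset.card_filter_add_card_filter_not,
    Finset.card_range]

lemma o1_antitone (w : Word) : Antitone (o1 w) := fun _ _ h =>
  Finset.card_le_card (Finset.filter_subset_filter _ (Finset.Ico_subset_Ico_left h))

lemma getD_length_sub_one_of_getLast? {w : Word} (hlast : w.getLast? = some true) (d : Bool) :
    w.getD (w.length - 1) d = true := by
  rw [List.getD_eq_getElem?_getD, ← List.getLast?_eq_getElem?, hlast, Option.getD_some]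

lemma o1_pos {w : Word} (hlast : w.getLast? = some true) {c : ℕ} (hc : c < w.length) :
    0 < o1 w c :=
  Finset.card_pos.mpr ⟨w.length - 1,
    Finset.mem_filter.mpr ⟨Finset.mem_Ico.mpr ⟨by omega, by omega⟩,
      getD_length_sub_one_of_getLast? hlast _⟩⟩

lemma succ_lt_length_of_getD_eq_false {w : Word} (hlast : w.getLast? = some true) {a : ℕ}
    (ha : w.getD a true = false) : a + 1 < w.length := by
  have ha_lt : a < w.length := by
    by_contra! h
    rw [List.getD_eq_default _ _ h] at ha
    cases ha
  have : a ≠ w.length - 1 := by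
    rintro rfl
    rw [getD_length_sub_one_of_getLast? hlast] at ha
    cases ha
  omega

lemma length_pos_of_head? {w : Word} (hhead : w.head? = some false) : 0 < w.length :=
  List.length_pos_iff.mpr (by rintro rfl; cases hhead)

lemma getD_zero_of_head? {w : Word} (hhead : w.head? = some false) (d : Bool) :
    w.getD 0 d = false := by
  rw [List.getD_eq_getElem?_getD, ← List.head?_eq_getElem?, hhead, Option.getD_some]

lemma z0_one {w : Word} (hhead : w.head? = some false) : z0 w 1 = 1 := by
  rw [z0_succ, getD_zero_of_head? hhead]
  rfl

lemma o1_one {w : Word} (hhead : w.head? = some false) : o1 w 1 = o1 w 0 := by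
  rw [o1, o1, ← Finset.insert_Ico_add_one_left_eq_Ico (length_pos_of_head? hhead),
    Finset.filter_insert, getD_zero_of_head? hhead]
  rfl

lemma harmonic_length_sub_one_le_phi1 {w : Word} (hhead : w.head? = some false)
    (hlast : w.getLast? = some true) : (harmonic w.length : ℝ) - 1 ≤ phi1 w := by
  set zeros := (Finset.range w.length).filter (fun a => w.getD a true = false)
  set T := o1 w 0
  set F : ℕ → ℝ := fun a =>
    ∑ k ∈ Finset.Icc 1 (o1 w (a + 1)), (1 : ℝ) / ((z0 w (a + 1) : ℝ) + (k : ℝ))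
  set g : ℕ → ℝ := fun a => 1 / ((z0 w (a + 1) : ℝ) + T)
  have hg_le : ∀ a ∈ zeros, g a ≤ F a := fun a ha =>
    one_div_add_le_sum_Icc (Nat.cast_nonneg _)
      (o1_pos hlast (succ_lt_length_of_getD_eq_false hlast (Finset.mem_filter.mp ha).2))
      (o1_antitone w (Nat.zero_le _))
  have hsum_g : ∑ a ∈ zeros, g a = harmonic (T + z0 w w.length) - harmonic T := by
    rw [sum_filter_getD_eq_false_comp_z0 w (fun j => 1 / ((j : ℝ) + T)),
      ← sum_Icc_one_div_add_eq_harmonic_sub]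
    simp only [add_comm]
  have hgap_zero : F 0 - g 0 = harmonic T - 1 := by
    simp only [F, g, z0_one hhead, o1_one hhead]
    rw [sum_Icc_one_div_add_eq_harmonic_sub, add_comm 1, harmonic_succ, harmonic_succ 0,
      harmonic_zero]
    push_cast
    ring
  have hzero_mem : 0 ∈ zeros :=
    Finset.mem_filter.mpr
      ⟨Finset.mem_range.mpr (length_pos_of_head? hhead), getD_zero_of_head? hhead _⟩
  calc (harmonic w.length : ℝ) - 1 = ∑ a ∈ zeros, g a + (F 0 - g 0) := by
        conv_lhs => rw [← z0_length_add_o1_zero w, add_comm]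
        rw [hsum_g, hgap_zero]
        ring
    _ ≤ ∑ a ∈ zeros, g a + ∑ a ∈ zeros, (F a - g a) := by
        gcongr
        exact Finset.single_le_sum (fun a ha => sub_nonneg.mpr (hg_le a ha)) hzero_mem
    _ = phi1 w := by rw [← Finset.sum_add_distrib]; simp [phi1, zeros, F]

/-- Lemma 10: for every `S ∈ 𝒟 ∖ {𝒟₀}`, `φ₁(S) ≥ log(|S|/4)`. -/
theorem phi1_lower_bound (S : Word) (hS : IsConfig S) (hne : S ≠ groundState) :
    Real.log ((hz S : ℝ) / 4) ≤ phi1 S := by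
  obtain ⟨hhead, hlast⟩ := hS.resolve_left hne
  exact (log_div_four_le_harmonic_sub_one (length_pos_of_head? hhead)).trans
    (harmonic_length_sub_one_le_phi1 hhead hlast)

end EV
end
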